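/- Let n ≥ 1. For every permutation σ ∈ S_n there is exactly one strictly monotone tuple (τ_1,…,τ_r) of transpositions of [n] such that τ_1 τ_2 ⋯ τ_r = σ, and its length is r = n − #σ. Consequently, for every strictly monotone r-tuple of transpositions, the product τ_1 τ_2 ⋯ τ_r has exactly n − r cycles. -/

import Mathlib

/-!
Common definitions: permutations of `Fin n` play the role of the symmetric
group `S_n` on `[n] = {1,…,n}` (0-indexed).
-/

/-- The number of cycles of a permutation of `Fin n`, fixed points counted as cycles:
the number of fixed points plus the number of nontrivial cycles. -/
def cycleCount {n : ℕ} (σ : Equiv.Perm (Fin n)) : ℕ :=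
  (n - σ.support.card) + Multiset.card σ.cycleType

/-- The top (largest moved point) of a permutation, as a natural number
(via `Fin.val`).  For a transposition `(a b)` with `a < b` this is `b`. -/
def top {n : ℕ} (τ : Equiv.Perm (Fin n)) : ℕ :=
  τ.support.sup Fin.val

/-- The ordered product `f 0 * f 1 * ⋯ * f (r-1)` of a tuple of permutations. -/
def tupleProd {n r : ℕ} (f : Fin r → Equiv.Perm (Fin n)) : Equiv.Perm (Fin n) :=
  (List.ofFn f).prod

/-- A tuple all of whose entries are transpositions. -/
def IsTranspositionTuple {n r : ℕ} (f : Fin r → Equiv.Perm (Fin n)) : Prop :=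
  ∀ i, (f i).IsSwap

/-- A weakly monotone tuple of transpositions: the tops are weakly increasing. -/
def WeaklyMonotoneTuple {n r : ℕ} (f : Fin r → Equiv.Perm (Fin n)) : Prop :=
  IsTranspositionTuple f ∧ ∀ i j : Fin r, i ≤ j → top (f i) ≤ top (f j)

/-- A strictly monotone tuple of transpositions: the tops are strictly increasing. -/
def StrictlyMonotoneTuple {n r : ℕ} (f : Fin r → Equiv.Perm (Fin n)) : Prop :=
  IsTranspositionTuple f ∧ ∀ i j : Fin r, i < j → top (f i) < top (f j)

/-- The subgroup generated by a set of permutations acts transitively on `Fin n`. -/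
def ActsTransitively {n : ℕ} (S : Set (Equiv.Perm (Fin n))) : Prop :=
  ∀ x y : Fin n, ∃ g ∈ Subgroup.closure S, g x = y

/-- The Jucys–Murphy element `J_i = ∑_{j<i} (j i)` in the group algebra `ℂ[S_n]`
(`J_1 = 0` for the smallest index). -/
noncomputable def JM (n : ℕ) (i : Fin n) : MonoidAlgebra ℂ (Equiv.Perm (Fin n)) :=
  ∑ j ∈ Finset.Iio i, MonoidAlgebra.of ℂ (Equiv.Perm (Fin n)) (Equiv.swap j i)

/-- `Ω_{n,z} = ∑_{σ ∈ S_n} z^{#σ} σ` in the group algebra `ℂ[S_n]`. -/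
noncomputable def Omega (n : ℕ) (z : ℂ) : MonoidAlgebra ℂ (Equiv.Perm (Fin n)) :=
  ∑ σ : Equiv.Perm (Fin n), z ^ cycleCount σ • MonoidAlgebra.of ℂ (Equiv.Perm (Fin n)) σ

/-- The cycle type of a permutation as a partition of `n`: the multiset of cycle
lengths, fixed points contributing parts equal to `1`. -/
def fullCycleType {n : ℕ} (σ : Equiv.Perm (Fin n)) : Multiset ℕ :=
  σ.cycleType + Multiset.replicate (n - σ.support.card) 1

/-!
Let `(τ₁, …, τᵣ)` be strictly monotone with `τᵣ = (a b)`, `a < b`. The earlier factors move only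
points below `b`, so their product fixes `b`, and the full product `σ` sends `a` to `b` and fixes
every point above `b`. Thus `b` is the largest point moved by `σ` and `a = σ⁻¹ b`: the last factor
is determined by `σ`, which gives uniqueness, and peeling off `(σ⁻¹ b, b)` for the largest moved
point `b` gives existence. Since `b` is a fixed point of `τ₁ ⋯ τᵣ₋₁`, multiplying by `(a b)` merges
`b` into the cycle of `a`, so every factor lowers the number of cycles by one.
-/

open Equiv Equiv.Perm Finset

namespace Equiv.Perm

variable {α : Type*} [DecidableEq α] [Fintype α] {σ : Perm α} {a b : α}

theorem support_mul_swap_of_mem_of_notMem (ha : a ∈ σ.support) (hb : b ∉ σ.support) :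
    (σ * swap a b).support = insert b σ.support := by
  rw [mem_support] at ha
  rw [notMem_support] at hb
  have hab : a ≠ b := by rintro rfl; exact ha hb
  have hσa : σ a ≠ b := fun h => hab (σ.injective (h.trans hb.symm))
  ext x
  by_cases hxa : x = a
  · subst hxa; simp [hb, hab.symm, ha]
  by_cases hxb : x = b
  · subst hxb; simp [hσa]
  simp [swap_apply_of_ne_of_ne hxa hxb, hxb]

theorem IsCycle.mul_swap_of_mem_of_notMem (hσ : σ.IsCycle) (ha : a ∈ σ.support)
    (hb : b ∉ σ.support) : (σ * swap a b).IsCycle := by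
  set g := σ * swap a b
  have hgb : g b = σ a := by simp [g]
  have hga : g a = b := by simpa [g] using notMem_support.mp hb
  have hσa_ne : σ a ≠ b := fun h => hb (h ▸ apply_mem_support.mpr ha)
  have reach : ∀ k : ℕ, g.SameCycle b ((σ ^ k) a) := by
    intro k
    induction k with
    | zero => exact (hga ▸ sameCycle_apply_right.mpr (SameCycle.refl g a)).symm
    | succ k ih =>
      rw [pow_succ', mul_apply]
      by_cases hk : (σ ^ k) a = a
      · rw [hk, ← hgb]; exact sameCycle_apply_right.mpr (SameCycle.refl g b)
      · have hkb : (σ ^ k) a ≠ b := fun h => hb (h ▸ pow_apply_mem_support.mpr ha)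
        have : g ((σ ^ k) a) = σ ((σ ^ k) a) := by
          simp [g, swap_apply_of_ne_of_ne hk hkb]
        rw [← this]; exact sameCycle_apply_right.mpr ih
  refine ⟨b, hgb ▸ hσa_ne, fun y hy => ?_⟩
  rw [← mem_support, support_mul_swap_of_mem_of_notMem ha hb, mem_insert] at hy
  rcases hy with rfl | hy
  · exact SameCycle.refl g y
  · obtain ⟨k, -, rfl⟩ := (hσ.sameCycle (mem_support.mp ha) (mem_support.mp hy)).exists_pow_eq'
    exact reach k

theorem card_cycleType_mul_swap_of_mem_of_notMem (ha : a ∈ σ.support) (hb : b ∉ σ.support) :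
    Multiset.card (σ * swap a b).cycleType = Multiset.card σ.cycleType := by
  set γ := σ.cycleOf a
  set ρ := σ * γ⁻¹
  have hγ : γ ∈ σ.cycleFactorsFinset := cycleOf_mem_cycleFactorsFinset_iff.mpr ha
  have hργ : ρ.Disjoint γ := disjoint_mul_inv_of_mem_cycleFactorsFinset hγ
  have haγ : a ∈ γ.support := mem_support_cycleOf_iff.mpr ⟨SameCycle.refl σ a, ha⟩
  have hbγ : b ∉ γ.support := fun h => hb (support_cycleOf_le σ a h)
  have hbρ : b ∉ ρ.support := fun h => by
    simpa [support_inv, hb, hbγ] using support_mul_le σ γ⁻¹ h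
  have hρ : ρ.Disjoint (γ * swap a b) := by
    rw [disjoint_iff_disjoint_support, support_mul_swap_of_mem_of_notMem haγ hbγ,
      Finset.disjoint_insert_right]
    exact ⟨hbρ, disjoint_iff_disjoint_support.mp hργ⟩
  have hσ : σ = ρ * γ := (inv_mul_cancel_right σ γ).symm
  have hγcyc : γ.IsCycle := isCycle_cycleOf σ (mem_support.mp ha)
  rw [hσ, mul_assoc, hρ.cycleType_mul, hργ.cycleType_mul, Multiset.card_add, Multiset.card_add,
    card_cycleType_eq_one.mpr hγcyc,
    card_cycleType_eq_one.mpr (hγcyc.mul_swap_of_mem_of_notMem haγ hbγ)]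

theorem disjoint_swap_of_notMem (hab : a ≠ b) (ha : a ∉ σ.support) (hb : b ∉ σ.support) :
    σ.Disjoint (swap a b) := by
  rw [disjoint_iff_disjoint_support, support_swap hab, Finset.disjoint_insert_right,
    Finset.disjoint_singleton_right]
  exact ⟨ha, hb⟩

end Equiv.Perm

theorem cycleCount_one {n : ℕ} : cycleCount (1 : Perm (Fin n)) = n := by
  simp [cycleCount]

theorem cycleCount_mul_swap {n : ℕ} {σ : Perm (Fin n)} {a b : Fin n} (hab : a ≠ b)
    (hb : b ∉ σ.support) : cycleCount (σ * swap a b) + 1 = cycleCount σ := by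
  have hle : #(σ * swap a b).support ≤ n := (card_le_univ _).trans_eq (Fintype.card_fin n)
  by_cases ha : a ∈ σ.support
  · have hsupp := card_insert_of_notMem hb
    rw [← support_mul_swap_of_mem_of_notMem ha hb] at hsupp
    have hcyc := card_cycleType_mul_swap_of_mem_of_notMem ha hb
    unfold cycleCount
    omega
  · have hdisj := disjoint_swap_of_notMem hab ha hb
    have hsupp := hdisj.card_support_mul
    have hcyc := congrArg Multiset.card hdisj.cycleType_mul
    rw [card_support_swap hab] at hsupp
    rw [(isCycle_swap hab).cycleType, Multiset.card_add, Multiset.card_singleton] at hcyc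
    unfold cycleCount
    omega

section Tuples

variable {n r : ℕ}

theorem top_swap {a b : Fin n} (hab : a < b) : top (swap a b) = b.val := by
  rw [top, support_swap hab.ne, sup_insert, sup_singleton]
  omega

theorem Equiv.Perm.IsSwap.exists_lt {τ : Perm (Fin n)} (hτ : τ.IsSwap) :
    ∃ a b : Fin n, a < b ∧ τ = swap a b := by
  obtain ⟨a, b, hab, rfl⟩ := hτ
  rcases hab.lt_or_gt with h | h
  · exact ⟨a, b, h, rfl⟩
  · exact ⟨b, a, h, swap_comm a b⟩

theorem apply_eq_self_of_top_lt {σ : Perm (Fin n)} {x : Fin n} (hx : top σ < x.val) :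
    σ x = x :=
  notMem_support.mp fun h => hx.not_ge (le_sup (f := Fin.val) h)

theorem tupleProd_zero (f : Fin 0 → Perm (Fin n)) : tupleProd f = 1 := rfl

theorem tupleProd_snoc (f : Fin r → Perm (Fin n)) (τ : Perm (Fin n)) :
    tupleProd (Fin.snoc f τ) = tupleProd f * τ := by
  rw [tupleProd, tupleProd, List.ofFn_succ', List.prod_concat, Fin.snoc_last]
  simp only [Fin.snoc_castSucc]

theorem strictlyMonotoneTuple_snoc_iff {f : Fin r → Perm (Fin n)} {τ : Perm (Fin n)} :
    StrictlyMonotoneTuple (Fin.snoc f τ) ↔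
      StrictlyMonotoneTuple f ∧ τ.IsSwap ∧ ∀ i, top (f i) < top τ := by
  constructor
  · rintro ⟨hswap, hmono⟩
    refine ⟨⟨fun i => by simpa using hswap i.castSucc, fun i j hij => ?_⟩,
      by simpa using hswap (Fin.last r), fun i => ?_⟩
    · simpa using hmono i.castSucc j.castSucc (Fin.castSucc_lt_castSucc_iff.mpr hij)
    · simpa using hmono i.castSucc (Fin.last r) (Fin.castSucc_lt_last i)
  · rintro ⟨⟨hswap, hmono⟩, hτ, hlt⟩
    refine ⟨Fin.lastCases (by simpa) (fun i => by simpa using hswap i), fun i j hij => ?_⟩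
    induction j using Fin.lastCases with
    | last =>
      induction i using Fin.lastCases with
      | last => exact absurd hij (lt_irrefl _)
      | cast i => simpa using hlt i
    | cast j =>
      induction i using Fin.lastCases with
      | last => exact absurd hij (Fin.le_last _).not_gt
      | cast i => simpa using hmono i j (Fin.castSucc_lt_castSucc_iff.mp hij)

end Tuples

/-- `σ` lies in the copy of `S_m` inside `S_n`. -/
def SupportedBelow {n : ℕ} (m : ℕ) (σ : Perm (Fin n)) : Prop :=
  ∀ x : Fin n, m ≤ x.val → σ x = x

namespace SupportedBelow

variable {n m : ℕ} {σ p : Perm (Fin n)}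

theorem tupleProd_of_top_lt {r : ℕ} {f : Fin r → Perm (Fin n)}
    (hf : ∀ i, top (f i) < m) : SupportedBelow m (tupleProd f) := fun x hx =>
  Subgroup.list_prod_mem (K := MulAction.stabilizer (Perm (Fin n)) x) <|
    List.forall_mem_ofFn_iff.mpr fun i => apply_eq_self_of_top_lt ((hf i).trans_le hx)

theorem mul_swap {a b : Fin n} (hp : SupportedBelow b p) (hab : a < b) :
    SupportedBelow (b + 1) (p * swap a b) := fun x hx => by
  have hpx := hp x (by omega)
  rw [mul_apply, swap_apply_of_ne_of_ne (by omega) (by omega), hpx]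

theorem exists_mul_swap (hσ : SupportedBelow (m + 1) σ) (hm : ¬SupportedBelow m σ) :
    ∃ a b : Fin n, a < b ∧ b.val = m ∧ SupportedBelow m (σ * swap a b) := by
  obtain ⟨b, hbm, hσb⟩ : ∃ b : Fin n, m ≤ b.val ∧ σ b ≠ b := by
    simpa [SupportedBelow] using hm
  have hb : b.val = m := le_antisymm (not_lt.mp fun h => hσb (hσ b h)) hbm
  set a := σ⁻¹ b
  have hσa : σ a = b := σ.apply_symm_apply b
  have hab : a ≠ b := fun h => hσb (h ▸ hσa)
  have ha : a.val ≤ m := not_lt.mp fun h => hab ((hσ a h).symm.trans hσa)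
  refine ⟨a, b, lt_of_le_of_ne (by omega) hab, hb, fun x hx => ?_⟩
  by_cases hxb : x = b
  · rw [hxb, mul_apply, swap_apply_right, hσa]
  · have hxa : x ≠ a := by omega
    rw [mul_apply, swap_apply_of_ne_of_ne hxa hxb, hσ x (by omega)]

end SupportedBelow

section Factorization

variable {n r : ℕ}

theorem eq_of_mul_swap_eq_mul_swap {p p' : Perm (Fin n)} {a b a' b' : Fin n}
    (hp : SupportedBelow b p) (hp' : SupportedBelow b' p') (hab : a < b) (hab' : a' < b')
    (h : p * swap a b = p' * swap a' b') : p = p' ∧ a = a' ∧ b = b' := by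
  have hσa : (p * swap a b) a = b := by simp [hp b le_rfl]
  have hσa' : (p' * swap a' b') a' = b' := by simp [hp' b' le_rfl]
  obtain rfl : b = b' := by
    by_contra hne
    rcases lt_or_gt_of_ne hne with hlt | hlt
    · have := (hp.mul_swap hab) b' hlt
      rw [h] at this
      exact hab'.ne ((p' * swap a' b').injective (hσa'.trans this.symm))
    · have := (hp'.mul_swap hab') b hlt
      rw [← h] at this
      exact hab.ne ((p * swap a b).injective (hσa.trans this.symm))
  obtain rfl : a = a' := (p * swap a b).injective (hσa.trans (h ▸ hσa').symm)
  exact ⟨mul_right_cancel h, rfl, rfl⟩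

theorem exists_strictlyMonotoneTuple_of_supportedBelow (m : ℕ) {σ : Perm (Fin n)}
    (hσ : SupportedBelow m σ) :
    ∃ (r : ℕ) (f : Fin r → Perm (Fin n)),
      StrictlyMonotoneTuple f ∧ tupleProd f = σ ∧ ∀ i, top (f i) < m := by
  induction m generalizing σ with
  | zero =>
    refine ⟨0, Fin.elim0, ⟨fun i => i.elim0, fun i => i.elim0⟩, ?_, fun i => i.elim0⟩
    exact (tupleProd_zero _).trans (Perm.ext fun x => (hσ x (Nat.zero_le _)).symm)
  | succ m ih =>
    by_cases hm : SupportedBelow m σ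
    · obtain ⟨r, f, hf, hprod, htop⟩ := ih hm
      exact ⟨r, f, hf, hprod, fun i => (htop i).trans m.lt_succ_self⟩
    obtain ⟨a, b, hab, rfl, hσ'⟩ := hσ.exists_mul_swap hm
    obtain ⟨r, f, hf, hprod, htop⟩ := ih hσ'
    refine ⟨r + 1, Fin.snoc f (swap a b), ?_, ?_, Fin.lastCases ?_ fun i => ?_⟩
    · exact strictlyMonotoneTuple_snoc_iff.mpr ⟨hf, ⟨a, b, hab.ne, rfl⟩, by rwa [top_swap hab]⟩
    · rw [tupleProd_snoc, hprod, mul_swap_mul_self]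
    · rw [Fin.snoc_last, top_swap hab]; exact b.val.lt_succ_self
    · rw [Fin.snoc_castSucc]; exact (htop i).trans b.val.lt_succ_self

theorem StrictlyMonotoneTuple.exists_eq_snoc_swap {f : Fin (r + 1) → Perm (Fin n)}
    (hf : StrictlyMonotoneTuple f) :
    ∃ (g : Fin r → Perm (Fin n)) (a b : Fin n), a < b ∧ f = Fin.snoc g (swap a b) ∧
      StrictlyMonotoneTuple g ∧ SupportedBelow b (tupleProd g) := by
  rw [← Fin.snoc_init_self f, strictlyMonotoneTuple_snoc_iff] at hf
  obtain ⟨hg, hτ, htop⟩ := hf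
  obtain ⟨a, b, hab, hτ⟩ := hτ.exists_lt
  rw [hτ, top_swap hab] at htop
  exact ⟨Fin.init f, a, b, hab, hτ ▸ (Fin.snoc_init_self f).symm, hg,
    SupportedBelow.tupleProd_of_top_lt htop⟩

theorem StrictlyMonotoneTuple.cycleCount_tupleProd_add {f : Fin r → Perm (Fin n)}
    (hf : StrictlyMonotoneTuple f) : cycleCount (tupleProd f) + r = n := by
  induction r with
  | zero => rw [tupleProd_zero, cycleCount_one, add_zero]
  | succ r ih =>
    obtain ⟨g, a, b, hab, rfl, hg, hgb⟩ := hf.exists_eq_snoc_swap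
    have hb : b ∉ (tupleProd g).support := notMem_support.mpr (hgb b le_rfl)
    have := cycleCount_mul_swap hab.ne hb
    have := ih hg
    rw [tupleProd_snoc]
    omega

theorem StrictlyMonotoneTuple.eq_of_tupleProd_eq {f f' : Fin r → Perm (Fin n)}
    (hf : StrictlyMonotoneTuple f) (hf' : StrictlyMonotoneTuple f')
    (h : tupleProd f = tupleProd f') : f = f' := by
  induction r with
  | zero => exact Subsingleton.elim f f'
  | succ r ih =>
    obtain ⟨g, a, b, hab, rfl, hg, hgb⟩ := hf.exists_eq_snoc_swap
    obtain ⟨g', a', b', hab', rfl, hg', hgb'⟩ := hf'.exists_eq_snoc_swap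
    rw [tupleProd_snoc, tupleProd_snoc] at h
    obtain ⟨hp, rfl, rfl⟩ := eq_of_mul_swap_eq_mul_swap hgb hgb' hab hab' h
    rw [ih hg hg' hp]

end Factorization

theorem existsUnique_strictly_monotone_factorization_general (n : ℕ)
    (σ : Equiv.Perm (Fin n)) :
    (∃! p : (r : ℕ) × (Fin r → Equiv.Perm (Fin n)),
        StrictlyMonotoneTuple p.2 ∧ tupleProd p.2 = σ) ∧
    (∀ (r : ℕ) (f : Fin r → Equiv.Perm (Fin n)),
        StrictlyMonotoneTuple f → tupleProd f = σ → r = n - cycleCount σ) ∧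
    (∀ (r : ℕ) (f : Fin r → Equiv.Perm (Fin n)),
        StrictlyMonotoneTuple f → cycleCount (tupleProd f) = n - r) := by
  have hlen (r : ℕ) (f : Fin r → Perm (Fin n)) (hf : StrictlyMonotoneTuple f)
      (hσ : tupleProd f = σ) : r = n - cycleCount σ := by
    have := hf.cycleCount_tupleProd_add
    subst hσ
    omega
  obtain ⟨r, f, hf, hσ, -⟩ :=
    exists_strictlyMonotoneTuple_of_supportedBelow n (σ := σ) fun x hx => absurd x.isLt hx.not_gt
  refine ⟨⟨⟨r, f⟩, ⟨hf, hσ⟩, ?_⟩, hlen, fun r f hf => ?_⟩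
  · rintro ⟨r', f'⟩ ⟨hf' : StrictlyMonotoneTuple f', hσ' : tupleProd f' = σ⟩
    obtain rfl : r' = r := (hlen r' f' hf' hσ').trans (hlen r f hf hσ).symm
    rw [hf'.eq_of_tupleProd_eq hf (hσ'.trans hσ.symm)]
  · have := hf.cycleCount_tupleProd_add
    omega

/-- Every `σ ∈ S_n` has exactly one strictly monotone factorization
into transpositions; its length is `n - #σ`.  Consequently the product of any strictly
monotone `r`-tuple of transpositions has exactly `n - r` cycles. -/
theorem existsUnique_strictly_monotone_factorization (n : ℕ) (hn : 1 ≤ n)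
    (σ : Equiv.Perm (Fin n)) :
    (∃! p : (r : ℕ) × (Fin r → Equiv.Perm (Fin n)),
        StrictlyMonotoneTuple p.2 ∧ tupleProd p.2 = σ) ∧
    (∀ (r : ℕ) (f : Fin r → Equiv.Perm (Fin n)),
        StrictlyMonotoneTuple f → tupleProd f = σ → r = n - cycleCount σ) ∧
    (∀ (r : ℕ) (f : Fin r → Equiv.Perm (Fin n)),
        StrictlyMonotoneTuple f → cycleCount (tupleProd f) = n - r) :=
  existsUnique_strictly_monotone_factorization_general n σ
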